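/- arXiv:1901.07105 — 3 statements merged into one kernel-verified Lean document; each statement's English description precedes it below -/
import Mathlib

section
/- As α → 1, the Arimoto conditional entropy H_α(X|Y) = (α/(1−α)) log ∑_y (∑_x P_{XY}(x,y)^α)^{1/α} converges to the Shannon conditional entropy H(X|Y). -/
/-!
Write `g α = ∑_y ‖P(·, y)‖_α` with `‖p‖_α = (∑_x p_x^α)^{1/α}`, so that `g 1 = 1` and the Arimoto
entropy is `α/(1-α) · log g α`. Since `log g 1 = 0`, the limit at `α = 1` is `-(log g)'(1) = -g'(1)`,
and differentiating `(∑_x p_x^α)^{1/α}` at `α = 1` gives `∑_x p_x log (p_x / ∑_x' p_x')`.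
-/

open Finset Real Filter Topology

section PowerSumNorm

variable {ι : Type*} [Fintype ι] {p : ι → ℝ}

theorem hasDerivAt_sum_rpow_one (hp : ∀ i, 0 < p i) :
    HasDerivAt (fun α : ℝ => ∑ i, p i ^ α) (∑ i, p i * log (p i)) 1 :=
  HasDerivAt.fun_sum fun i _ => by
    simpa only [rpow_one] using (hasStrictDerivAt_const_rpow (hp i) 1).hasDerivAt

theorem sum_mul_log_div_sum [Nonempty ι] (hp : ∀ i, 0 < p i) :
    ∑ i, p i * log (p i / ∑ j, p j) = ∑ i, p i * log (p i) - (∑ i, p i) * log (∑ i, p i) := by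
  have hsum : 0 < ∑ j, p j := sum_pos (fun i _ => hp i) univ_nonempty
  simp only [log_div (hp _).ne' hsum.ne', mul_sub, sum_sub_distrib, sum_mul]

theorem hasDerivAt_sum_rpow_rpow_inv_one [Nonempty ι] (hp : ∀ i, 0 < p i) :
    HasDerivAt (fun α : ℝ => (∑ i, p i ^ α) ^ (1 / α)) (∑ i, p i * log (p i / ∑ j, p j)) 1 := by
  have hsum : 0 < ∑ i, p i ^ (1 : ℝ) := by
    simpa only [rpow_one] using sum_pos (fun i _ => hp i) univ_nonempty
  have hinv : HasDerivAt (fun α : ℝ => 1 / α) (-1) 1 := by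
    simpa only [one_div, inv_one, one_pow, neg_div, div_one] using hasDerivAt_inv (one_ne_zero (α := ℝ))
  convert (hasDerivAt_sum_rpow_one hp).rpow hinv hsum using 1
  simp only [sum_mul_log_div_sum hp, rpow_one, div_one, sub_self, rpow_zero]
  ring

end PowerSumNorm

theorem tendsto_div_one_sub_mul_of_hasDerivAt {f : ℝ → ℝ} {d : ℝ} (hf : HasDerivAt f d 1)
    (hf1 : f 1 = 0) :
    Tendsto (fun α : ℝ => α / (1 - α) * f α) (𝓝[≠] 1) (𝓝 (-d)) := by
  have hneg : Tendsto (fun α : ℝ => -α) (𝓝[≠] 1) (𝓝 (-1)) :=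
    tendsto_nhdsWithin_of_tendsto_nhds (continuous_neg.tendsto 1)
  have hlim := hneg.mul hf.tendsto_slope
  rw [neg_one_mul] at hlim
  refine hlim.congr' (eventually_nhdsWithin_of_forall fun α (hα : α ≠ 1) => ?_)
  have h1α : 1 - α ≠ 0 := sub_ne_zero.mpr hα.symm
  have hα1 : α - 1 ≠ 0 := sub_ne_zero.mpr hα
  rw [slope_def_field, hf1]
  field_simp
  ring

/-- As `α → 1`, the Arimoto conditional entropy converges to Shannon conditional entropy. -/
theorem arimoto_cond_entropy_tendsto_shannon {X Y : Type*} [Fintype X] [Fintype Y]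
    (P : X → Y → ℝ)
    (hPpos : ∀ x y, 0 < P x y) (hPsum : ∑ x, ∑ y, P x y = 1) :
    Tendsto
      (fun α : ℝ => (α / (1 - α)) *
        Real.log (∑ y, (∑ x, P x y ^ α) ^ (1/α)))
      (𝓝[≠] (1 : ℝ))
      (𝓝 (- ∑ x, ∑ y, P x y * Real.log (P x y / (∑ x', P x' y)))) := by
  have : Nonempty X := by
    by_contra h
    simp [not_nonempty_iff.mp h] at hPsum
  have hg1 : ∑ y, (∑ x, P x y ^ (1 : ℝ)) ^ (1 / (1 : ℝ)) = 1 := by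
    simpa only [rpow_one, div_one, sum_comm (γ := X)] using hPsum
  have hg := HasDerivAt.fun_sum fun y (_ : y ∈ univ) =>
    hasDerivAt_sum_rpow_rpow_inv_one fun x => hPpos x y
  have hlog := hg.log (by rw [hg1]; exact one_ne_zero)
  rw [hg1, div_one, sum_comm] at hlog
  exact tendsto_div_one_sub_mul_of_hasDerivAt hlog (by simp only [hg1, log_one])
end

section
/- For α > 1 and any fixed channel P_{Y|X} on finite alphabets, the supremum over input distributions P_X of the Sibson mutual information I_α^S(X;Y) equals the supremum over input distributions of the Arimoto mutual information I_α^A(X;Y). -/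
/-!
The escort map `p ↦ p ^ α / ∑ p ^ α` turns the Arimoto expression at `p` into the Sibson
expression at the escort of `p`, and it is a bijection of the probability simplex, with inverse
the escort map of order `1 / α`. Hence the two sets of values coincide, and so do their suprema.
-/

open Finset Real

section Escort

variable {X : Type*} [Fintype X]

noncomputable def escort (p : X → ℝ) (β : ℝ) (x : X) : ℝ :=
  p x ^ β / ∑ x', p x' ^ β

lemma exists_pos_of_sum_eq_one {p : X → ℝ} (hsum : ∑ x, p x = 1) : ∃ x, 0 < p x := by
  by_contra! h
  have : ∑ x, p x ≤ 0 := sum_nonpos fun x _ => h x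
  linarith

lemma sum_rpow_pos {p : X → ℝ} (hp : ∀ x, 0 ≤ p x) (hsum : ∑ x, p x = 1) (β : ℝ) :
    0 < ∑ x, p x ^ β := by
  obtain ⟨x₀, hx₀⟩ := exists_pos_of_sum_eq_one hsum
  exact sum_pos' (fun x _ => rpow_nonneg (hp x) β) ⟨x₀, mem_univ _, rpow_pos_of_pos hx₀ β⟩

lemma escort_nonneg {p : X → ℝ} (hp : ∀ x, 0 ≤ p x) (β : ℝ) (x : X) : 0 ≤ escort p β x :=
  div_nonneg (rpow_nonneg (hp x) β) (sum_nonneg fun x _ => rpow_nonneg (hp x) β)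

lemma sum_escort {p : X → ℝ} (hp : ∀ x, 0 ≤ p x) (hsum : ∑ x, p x = 1) (β : ℝ) :
    ∑ x, escort p β x = 1 := by
  simp only [escort]
  rw [← sum_div, div_self (sum_rpow_pos hp hsum β).ne']

lemma escort_one {p : X → ℝ} (hsum : ∑ x, p x = 1) : escort p 1 = p := by
  ext x
  simp only [escort, rpow_one, hsum, div_one]

lemma escort_escort {p : X → ℝ} (hp : ∀ x, 0 ≤ p x) (hsum : ∑ x, p x = 1) (β γ : ℝ) :
    escort (escort p β) γ = escort p (β * γ) := by
  have hT := (sum_rpow_pos hp hsum β).le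
  have hpow : ∀ x, escort p β x ^ γ = p x ^ (β * γ) / (∑ x', p x' ^ β) ^ γ := fun x => by
    rw [escort, div_rpow (rpow_nonneg (hp x) β) hT, ← rpow_mul (hp x)]
  have hTγ : (∑ x', p x' ^ β) ^ γ ≠ 0 := (rpow_pos_of_pos (sum_rpow_pos hp hsum β) γ).ne'
  ext x
  rw [escort, hpow, sum_congr rfl fun x _ => hpow x, ← sum_div, div_div_div_cancel_right₀ hTγ,
    escort]

lemma sum_rpow_mul_div_eq_sum_escort_mul (p w : X → ℝ) (β : ℝ) :
    (∑ x, p x ^ β * w x) / ∑ x', p x' ^ β = ∑ x, escort p β x * w x := by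
  rw [sum_div]
  exact sum_congr rfl fun x _ => div_mul_eq_mul_div _ _ _ |>.symm

end Escort

theorem sup_sibson_eq_sup_arimoto_general {X Y : Type*} [Fintype X] [Fintype Y]
    (α : ℝ) (hα : 1 < α)
    (W : X → Y → ℝ) :
    sSup {r : ℝ | ∃ p : X → ℝ, (∀ x, 0 ≤ p x) ∧ (∑ x, p x = 1) ∧
        r = (α / (α - 1)) * Real.log (∑ y, (∑ x, p x * W x y ^ α) ^ (1/α))}
    = sSup {r : ℝ | ∃ p : X → ℝ, (∀ x, 0 ≤ p x) ∧ (∑ x, p x = 1) ∧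
        r = (α / (α - 1)) *
          Real.log (∑ y, ((∑ x, p x ^ α * W x y ^ α) / (∑ x', p x' ^ α)) ^ (1/α))} := by
  simp_rw [sum_rpow_mul_div_eq_sum_escort_mul]
  congr 1
  ext r
  constructor
  · rintro ⟨p, hp, hsum, rfl⟩
    refine ⟨escort p (1 / α), escort_nonneg hp _, sum_escort hp hsum _, ?_⟩
    rw [escort_escort hp hsum, one_div_mul_cancel (by linarith), escort_one hsum]
  · rintro ⟨p, hp, hsum, rfl⟩
    exact ⟨escort p α, escort_nonneg hp α, sum_escort hp hsum α, rfl⟩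

/-- For `α > 1` and a fixed channel, the supremum over input pmfs of the Sibson
mutual information equals the supremum over input pmfs of the Arimoto mutual
information. -/
theorem sup_sibson_eq_sup_arimoto {X Y : Type*} [Fintype X] [Fintype Y] [Nonempty X]
    (α : ℝ) (hα : 1 < α)
    (W : X → Y → ℝ) (hWnn : ∀ x y, 0 ≤ W x y) (hWsum : ∀ x, ∑ y, W x y = 1) :
    sSup {r : ℝ | ∃ p : X → ℝ, (∀ x, 0 ≤ p x) ∧ (∑ x, p x = 1) ∧
        r = (α / (α - 1)) * Real.log (∑ y, (∑ x, p x * W x y ^ α) ^ (1/α))}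
    = sSup {r : ℝ | ∃ p : X → ℝ, (∀ x, 0 ≤ p x) ∧ (∑ x, p x = 1) ∧
        r = (α / (α - 1)) *
          Real.log (∑ y, ((∑ x, p x ^ α * W x y ^ α) / (∑ x', p x' ^ α)) ^ (1/α))} :=
  sup_sibson_eq_sup_arimoto_general α hα W
end

section
/- For α > 1, the Sibson mutual information satisfies the data processing inequality on the input: if U − X − Y forms a Markov chain on finite alphabets, then I_α^S(U;Y) ≤ I_α^S(X;Y). -/
/-!
For each output letter `y`, convexity of `t ↦ t ^ α` applied to the mixture
`P_{Y|U}(y|u) = ∑ₓ P_{X|U}(x|u) W(y|x)` gives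
`∑ᵤ P_U(u) P_{Y|U}(y|u)^α ≤ ∑ₓ P_X(x) W(y|x)^α`. Raising to the power `1/α`, summing over `y`
and taking `(α/(α-1)) log` preserves the inequality; the logarithm is monotone here because,
by the power-mean inequality, the left-hand sum is at least `∑_y P_Y(y) = 1`.
-/

open Finset Real

section

variable {U X Y : Type*}

/-- Channels are row-stochastic matrices, `V u x = P_{X|U}(x|u)`. -/
def channelComp [Fintype X] (V : U → X → ℝ) (W : X → Y → ℝ) : U → Y → ℝ :=
  fun u y => ∑ x, V u x * W x y

def outputDist [Fintype U] (P : U → ℝ) (V : U → X → ℝ) : X → ℝ :=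
  fun x => ∑ u, P u * V u x

/-- `I_α^S(X;Y) = (α / (α - 1)) * log (sibsonSum α P_X P_{Y|X})`. -/
noncomputable def sibsonSum [Fintype X] [Fintype Y] (α : ℝ) (P : X → ℝ) (W : X → Y → ℝ) : ℝ :=
  ∑ y, (∑ x, P x * W x y ^ α) ^ (1 / α)

lemma channelComp_nonneg [Fintype X] {V : U → X → ℝ} {W : X → Y → ℝ} (hV : ∀ u x, 0 ≤ V u x)
    (hW : ∀ x y, 0 ≤ W x y) (u : U) (y : Y) : 0 ≤ channelComp V W u y :=
  sum_nonneg fun x _ => mul_nonneg (hV u x) (hW x y)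

lemma sum_channelComp_eq_one [Fintype X] [Fintype Y] {V : U → X → ℝ} {W : X → Y → ℝ} (hV : ∀ u, ∑ x, V u x = 1)
    (hW : ∀ x, ∑ y, W x y = 1) (u : U) : ∑ y, channelComp V W u y = 1 := by
  simp only [channelComp]
  rw [sum_comm]
  simp only [← mul_sum, hW, mul_one, hV]

lemma one_le_sibsonSum [Fintype X] [Fintype Y] {α : ℝ} (hα : 1 ≤ α) {P : X → ℝ} {W : X → Y → ℝ}
    (hP : ∀ x, 0 ≤ P x) (hP1 : ∑ x, P x = 1) (hW : ∀ x y, 0 ≤ W x y)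
    (hW1 : ∀ x, ∑ y, W x y = 1) : 1 ≤ sibsonSum α P W :=
  calc (1 : ℝ) = ∑ y, ∑ x, P x * W x y := by
        rw [sum_comm]
        simp only [← mul_sum, hW1, mul_one, hP1]
    _ ≤ sibsonSum α P W := sum_le_sum fun y _ =>
        arith_mean_le_rpow_mean univ P (W · y) (fun x _ => hP x) hP1 (fun x _ => hW x y) hα

lemma sum_mul_rpow_channelComp_le [Fintype U] [Fintype X] {α : ℝ} (hα : 1 ≤ α) {P : U → ℝ} {V : U → X → ℝ}
    {W : X → Y → ℝ} (hP : ∀ u, 0 ≤ P u) (hV : ∀ u x, 0 ≤ V u x) (hV1 : ∀ u, ∑ x, V u x = 1)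
    (hW : ∀ x y, 0 ≤ W x y) (y : Y) :
    ∑ u, P u * channelComp V W u y ^ α ≤ ∑ x, outputDist P V x * W x y ^ α :=
  calc ∑ u, P u * channelComp V W u y ^ α ≤ ∑ u, P u * ∑ x, V u x * W x y ^ α :=
        sum_le_sum fun u _ => mul_le_mul_of_nonneg_left
          (rpow_arith_mean_le_arith_mean_rpow univ (V u) (W · y) (fun x _ => hV u x) (hV1 u)
            (fun x _ => hW x y) hα) (hP u)
    _ = ∑ x, outputDist P V x * W x y ^ α := by
        simp only [outputDist, mul_sum, sum_mul, mul_assoc]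
        exact sum_comm

lemma sibsonSum_channelComp_le [Fintype U] [Fintype X] [Fintype Y] {α : ℝ} (hα : 1 ≤ α) {P : U → ℝ} {V : U → X → ℝ}
    {W : X → Y → ℝ} (hP : ∀ u, 0 ≤ P u) (hV : ∀ u x, 0 ≤ V u x) (hV1 : ∀ u, ∑ x, V u x = 1)
    (hW : ∀ x y, 0 ≤ W x y) :
    sibsonSum α P (channelComp V W) ≤ sibsonSum α (outputDist P V) W :=
  sum_le_sum fun y _ => rpow_le_rpow
    (sum_nonneg fun u _ => mul_nonneg (hP u) (rpow_nonneg (channelComp_nonneg hV hW u y) α))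
    (sum_mul_rpow_channelComp_le hα hP hV hV1 hW y) (by positivity)

end

/-- Data processing inequality on the input for Sibson mutual information:
if `U − X − Y` is a Markov chain then `I_α^S(U;Y) ≤ I_α^S(X;Y)` for `α > 1`. -/
theorem sibson_data_processing {U X Y : Type*} [Fintype U] [Fintype X] [Fintype Y]
    (α : ℝ) (hα : 1 < α)
    (PU : U → ℝ) (PXU : U → X → ℝ) (W : X → Y → ℝ)
    (hPUnn : ∀ u, 0 ≤ PU u) (hPUsum : ∑ u, PU u = 1)
    (hPXUnn : ∀ u x, 0 ≤ PXU u x) (hPXUsum : ∀ u, ∑ x, PXU u x = 1)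
    (hWnn : ∀ x y, 0 ≤ W x y) (hWsum : ∀ x, ∑ y, W x y = 1) :
    (α / (α - 1)) *
        Real.log (∑ y, (∑ u, PU u * (∑ x, PXU u x * W x y) ^ α) ^ (1/α))
    ≤ (α / (α - 1)) *
        Real.log (∑ y, (∑ x, (∑ u, PU u * PXU u x) * W x y ^ α) ^ (1/α)) := by
  change α / (α - 1) * log (sibsonSum α PU (channelComp PXU W))
    ≤ α / (α - 1) * log (sibsonSum α (outputDist PU PXU) W)
  have hpos : 0 < sibsonSum α PU (channelComp PXU W) :=
    one_pos.trans_le <| one_le_sibsonSum hα.le hPUnn hPUsum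
      (channelComp_nonneg hPXUnn hWnn) (sum_channelComp_eq_one hPXUsum hWsum)
  have hcoef : 0 ≤ α / (α - 1) := div_nonneg (by linarith) (by linarith)
  exact mul_le_mul_of_nonneg_left
    (log_le_log hpos (sibsonSum_channelComp_le hα.le hPUnn hPXUnn hPXUsum hWnn)) hcoef
end
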